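/- For a tripartite no-signalling distribution P(a₁a₂a₃|x₁x₂x₃), if P admits a hybrid decomposition as a convex combination of products across the three bipartitions (A₁A₂|A₃), (A₁A₃|A₂), (A₂A₃|A₁) — where in each term the two-party factor may be an arbitrary no-signalling distribution and the single-party factor an arbitrary distribution — then I_sym = I^{12}_{0|0} + I^{13}_{0|0} + I^{23}_{0|0} − P(000|000) ≤ 0, where I^{ij}_{0|0} denotes the lifted CHSH-variant on parties i,j with the third party's input and output fixed to 0. -/

import Mathlib

/-- A bipartite no-signalling probability distribution `B a₁ a₂ x₁ x₂`. -/
def IsNSBipartite (B : Fin 2 → Fin 2 → Fin 2 → Fin 2 → ℝ) : Prop :=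
  (∀ a₁ a₂ x₁ x₂, 0 ≤ B a₁ a₂ x₁ x₂) ∧
  (∀ x₁ x₂, ∑ a₁, ∑ a₂, B a₁ a₂ x₁ x₂ = 1) ∧
  (∀ a₁ x₁ x₂ x₂', ∑ a₂, B a₁ a₂ x₁ x₂ = ∑ a₂, B a₁ a₂ x₁ x₂') ∧
  (∀ a₂ x₁ x₁' x₂, ∑ a₁, B a₁ a₂ x₁ x₂ = ∑ a₁, B a₁ a₂ x₁' x₂)

/-- A single-party probability distribution `S a x`. -/
def IsDist1 (S : Fin 2 → Fin 2 → ℝ) : Prop :=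
  (∀ a x, 0 ≤ S a x) ∧ (∀ x, ∑ a, S a x = 1)

/-!
`I_sym` is linear in `P`, so it suffices to show `I_sym ≤ 0` on every product term of the
hybrid decomposition, and since `I_sym` is invariant under relabelling the parties, only on
terms `B(a₁a₂|x₁x₂) S(a₃|x₃)`. There `I^{12}_{0|0} − P(000|000)` is a sum of negated
probabilities, while in `I^{13}_{0|0}` and `I^{23}_{0|0}` the two tested parties are
uncorrelated: conditioned on the third party's `(0|0)`, they see a product of a sub-normalised
one-party behaviour (a slice of `B`, whose mass does not depend on the input by no-signalling)
and `S`. The CHSH-variant `Q(00|00) − Q(01|01) − Q(10|10) − Q(00|11)` is nonpositive on such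
products.
-/

open Finset

abbrev Behaviour3 := Fin 2 → Fin 2 → Fin 2 → Fin 2 → Fin 2 → Fin 2 → ℝ

def chshVariant (Q : Fin 2 → Fin 2 → Fin 2 → Fin 2 → ℝ) : ℝ :=
  Q 0 0 0 0 - Q 0 1 0 1 - Q 1 0 1 0 - Q 0 0 1 1

def iSym (P : Behaviour3) : ℝ :=
  chshVariant (fun a₁ a₂ x₁ x₂ => P a₁ a₂ 0 x₁ x₂ 0) +
    chshVariant (fun a₁ a₃ x₁ x₃ => P a₁ 0 a₃ x₁ 0 x₃) +
    chshVariant (fun a₂ a₃ x₂ x₃ => P 0 a₂ a₃ 0 x₂ x₃) - P 0 0 0 0 0 0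

theorem chshVariant_sub_nonpos {Q : Fin 2 → Fin 2 → Fin 2 → Fin 2 → ℝ}
    (hQ : ∀ a₁ a₂ x₁ x₂, 0 ≤ Q a₁ a₂ x₁ x₂) : chshVariant Q - Q 0 0 0 0 ≤ 0 := by
  unfold chshVariant
  linarith [hQ 0 1 0 1, hQ 1 0 1 0, hQ 0 0 1 1]

theorem chshVariant_mul_nonpos {f g : Fin 2 → Fin 2 → ℝ}
    (hf : ∀ a x, 0 ≤ f a x) (hg : ∀ a x, 0 ≤ g a x)
    (hf_mass : ∑ a, f a 0 = ∑ a, f a 1) (hg_mass : ∑ a, g a 0 = ∑ a, g a 1) :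
    chshVariant (fun a₁ a₂ x₁ x₂ => f a₁ x₁ * g a₂ x₂) ≤ 0 := by
  simp only [Fin.sum_univ_two] at hf_mass hg_mass
  simp only [chshVariant]
  rcases le_total (g 0 0) (g 1 1) with h | h
  · nlinarith [mul_nonneg (hf 0 0) (sub_nonneg.2 h), mul_nonneg (hf 1 1) (hg 0 0),
      mul_nonneg (hf 0 1) (hg 0 1)]
  · have hE : f 0 0 * g 0 0 - f 0 0 * g 1 1 - f 1 1 * g 0 0 - f 0 1 * g 0 1 =
        -(f 0 1 * g 1 0) - f 1 1 * g 1 1 - f 1 0 * (g 0 0 - g 1 1) := by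
      linear_combination (g 0 0 - g 1 1) * hf_mass + f 0 1 * hg_mass
    rw [hE]
    linarith [mul_nonneg (hf 0 1) (hg 1 0), mul_nonneg (hf 1 1) (hg 1 1),
      mul_nonneg (hf 1 0) (sub_nonneg.2 h)]

theorem iSym_add (P Q : Behaviour3) : iSym (P + Q) = iSym P + iSym Q := by
  simp only [iSym, chshVariant, Pi.add_apply]
  ring

theorem iSym_sum_mul {ι : Type*} (s : Finset ι) (q : ι → ℝ) (T : ι → Behaviour3) :
    iSym (fun a₁ a₂ a₃ x₁ x₂ x₃ => ∑ l ∈ s, q l * T l a₁ a₂ a₃ x₁ x₂ x₃) =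
      ∑ l ∈ s, q l * iSym (T l) := by
  simp only [iSym, chshVariant, mul_sub, mul_add, sum_sub_distrib, sum_add_distrib]

theorem iSym_swap₂₃ (P : Behaviour3) :
    iSym (fun a₁ a₂ a₃ x₁ x₂ x₃ => P a₁ a₃ a₂ x₁ x₃ x₂) = iSym P := by
  simp only [iSym, chshVariant]
  ring

theorem iSym_rotate (P : Behaviour3) :
    iSym (fun a₁ a₂ a₃ x₁ x₂ x₃ => P a₃ a₁ a₂ x₃ x₁ x₂) = iSym P := by
  simp only [iSym, chshVariant]
  ring

theorem iSym_mul_nonpos {B : Fin 2 → Fin 2 → Fin 2 → Fin 2 → ℝ} {S : Fin 2 → Fin 2 → ℝ}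
    (hB : IsNSBipartite B) (hS : IsDist1 S) :
    iSym (fun a₁ a₂ a₃ x₁ x₂ x₃ => B a₁ a₂ x₁ x₂ * S a₃ x₃) ≤ 0 := by
  obtain ⟨hB_nonneg, -, hB_ns₁, hB_ns₂⟩ := hB
  obtain ⟨hS_nonneg, hS_sum⟩ := hS
  have hS_mass : ∑ a, S a 0 = ∑ a, S a 1 := (hS_sum 0).trans (hS_sum 1).symm
  have h₁₂ := chshVariant_sub_nonpos fun a₁ a₂ x₁ x₂ =>
    mul_nonneg (hB_nonneg a₁ a₂ x₁ x₂) (hS_nonneg 0 0)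
  have h₁₃ := chshVariant_mul_nonpos (fun a x => hB_nonneg a 0 x 0) hS_nonneg
    (hB_ns₂ 0 0 1 0) hS_mass
  have h₂₃ := chshVariant_mul_nonpos (fun a x => hB_nonneg 0 a 0 x) hS_nonneg
    (hB_ns₁ 0 0 0 1) hS_mass
  unfold iSym
  linarith

theorem stmt3 (P : Fin 2 → Fin 2 → Fin 2 → Fin 2 → Fin 2 → Fin 2 → ℝ)
    (N₁ N₂ N₃ : ℕ)
    (q₁ : Fin N₁ → ℝ) (q₂ : Fin N₂ → ℝ) (q₃ : Fin N₃ → ℝ)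
    (hq₁ : ∀ l, 0 ≤ q₁ l) (hq₂ : ∀ l, 0 ≤ q₂ l) (hq₃ : ∀ l, 0 ≤ q₃ l)
    (B₁₂ : Fin N₁ → Fin 2 → Fin 2 → Fin 2 → Fin 2 → ℝ) (S₃ : Fin N₁ → Fin 2 → Fin 2 → ℝ)
    (B₁₃ : Fin N₂ → Fin 2 → Fin 2 → Fin 2 → Fin 2 → ℝ) (S₂ : Fin N₂ → Fin 2 → Fin 2 → ℝ)
    (B₂₃ : Fin N₃ → Fin 2 → Fin 2 → Fin 2 → Fin 2 → ℝ) (S₁ : Fin N₃ → Fin 2 → Fin 2 → ℝ)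
    (hB₁₂ : ∀ l, IsNSBipartite (B₁₂ l)) (hS₃ : ∀ l, IsDist1 (S₃ l))
    (hB₁₃ : ∀ l, IsNSBipartite (B₁₃ l)) (hS₂ : ∀ l, IsDist1 (S₂ l))
    (hB₂₃ : ∀ l, IsNSBipartite (B₂₃ l)) (hS₁ : ∀ l, IsDist1 (S₁ l))
    (hP : ∀ a₁ a₂ a₃ x₁ x₂ x₃, P a₁ a₂ a₃ x₁ x₂ x₃ =
      (∑ l, q₁ l * B₁₂ l a₁ a₂ x₁ x₂ * S₃ l a₃ x₃) +
      (∑ l, q₂ l * B₁₃ l a₁ a₃ x₁ x₃ * S₂ l a₂ x₂) +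
      (∑ l, q₃ l * B₂₃ l a₂ a₃ x₂ x₃ * S₁ l a₁ x₁)) :
    -- I^{12}_{0|0}
    (P 0 0 0 0 0 0 - P 0 1 0 0 1 0 - P 1 0 0 1 0 0 - P 0 0 0 1 1 0) +
    -- I^{13}_{0|0}
    (P 0 0 0 0 0 0 - P 0 0 1 0 0 1 - P 1 0 0 1 0 0 - P 0 0 0 1 0 1) +
    -- I^{23}_{0|0}
    (P 0 0 0 0 0 0 - P 0 0 1 0 0 1 - P 0 1 0 0 1 0 - P 0 0 0 0 1 1) -
    P 0 0 0 0 0 0 ≤ 0 := by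
  have hP_split : P =
      (fun a₁ a₂ a₃ x₁ x₂ x₃ => ∑ l, q₁ l * (B₁₂ l a₁ a₂ x₁ x₂ * S₃ l a₃ x₃)) +
      (fun a₁ a₂ a₃ x₁ x₂ x₃ => ∑ l, q₂ l * (B₁₃ l a₁ a₃ x₁ x₃ * S₂ l a₂ x₂)) +
      (fun a₁ a₂ a₃ x₁ x₂ x₃ => ∑ l, q₃ l * (B₂₃ l a₂ a₃ x₂ x₃ * S₁ l a₁ x₁)) := by
    funext a₁ a₂ a₃ x₁ x₂ x₃
    simp only [hP, Pi.add_apply, mul_assoc]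
  change iSym P ≤ 0
  rw [hP_split, iSym_add, iSym_add, iSym_sum_mul, iSym_sum_mul, iSym_sum_mul]
  refine add_nonpos (add_nonpos ?_ ?_) ?_ <;>
    refine sum_nonpos fun l _ => mul_nonpos_of_nonneg_of_nonpos ?_ ?_
  · exact hq₁ l
  · exact iSym_mul_nonpos (hB₁₂ l) (hS₃ l)
  · exact hq₂ l
  · rw [← iSym_swap₂₃]
    exact iSym_mul_nonpos (hB₁₃ l) (hS₂ l)
  · exact hq₃ l
  · rw [← iSym_rotate]
    exact iSym_mul_nonpos (hB₂₃ l) (hS₁ l)
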